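/- arXiv:1609.04616 — 2 statements merged into one kernel-verified Lean document; each statement's English description precedes it below -/
import Mathlib

section
/- Let q ≥ 1 be an integer and let (s_j)_{j=0}^∞ be a Stieltjes positive definite sequence of complex q×q matrices with Stieltjes parametrization (𝔮_j)_{j=0}^∞, and write L_k := 𝔮_{2k} and Λ_k := 𝔮_{2k+1} for the even- and odd-indexed parameters. Then the corresponding parameters of the first Kátětov transform satisfy L_k^{(1)} = Λ_k and Λ_k^{(1)} = L_{k+1} for every k ∈ ℕ₀. -/
open Matrix
open scoped ComplexOrder

noncomputable section

/-- The space of complex `q × q` matrices. -/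
abbrev Mq (q : ℕ) := Matrix (Fin q) (Fin q) ℂ

/-- The space of complex `2q × 2q` matrices, written in `q × q` blocks. -/
abbrev M2q (q : ℕ) := Matrix (Fin q ⊕ Fin q) (Fin q ⊕ Fin q) ℂ

/-- Block Hankel matrix `H_n = (s_{j+k})_{j,k=0}^n`. -/
def Hmat (q : ℕ) (s : ℕ → Mq q) (n : ℕ) :
    Matrix (Fin (n + 1) × Fin q) (Fin (n + 1) × Fin q) ℂ :=
  Matrix.of fun p r => s (p.1.1 + r.1.1) p.2 r.2

/-- Block Hankel matrix `K_n = (s_{j+k+1})_{j,k=0}^n`. -/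
def Kmat (q : ℕ) (s : ℕ → Mq q) (n : ℕ) :
    Matrix (Fin (n + 1) × Fin q) (Fin (n + 1) × Fin q) ℂ :=
  Matrix.of fun p r => s (p.1.1 + r.1.1 + 1) p.2 r.2

/-- A sequence of complex `q × q` matrices is Stieltjes positive definite if all the
block Hankel matrices `H_n` and `K_n` are positive definite (in particular Hermitian). -/
def IsStieltjesPD (q : ℕ) (s : ℕ → Mq q) : Prop :=
  ∀ n : ℕ, (Hmat q s n).PosDef ∧ (Kmat q s n).PosDef

/-- Even Stieltjes parameters `𝔮_{2k}` (Schur complements `L_k`). -/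
def qEven (q : ℕ) (s : ℕ → Mq q) : ℕ → Mq q
  | 0 => s 0
  | k + 1 =>
      s (2 * (k + 1)) -
        (Matrix.of fun (a : Fin q) (r : Fin (k + 1) × Fin q) => s (k + 1 + r.1.1) a r.2) *
          (Hmat q s k)⁻¹ *
          (Matrix.of fun (p : Fin (k + 1) × Fin q) (b : Fin q) => s (k + 1 + p.1.1) p.2 b)

/-- Odd Stieltjes parameters `𝔮_{2k+1}` (Schur complements `Λ_k`). -/
def qOdd (q : ℕ) (s : ℕ → Mq q) : ℕ → Mq q
  | 0 => s 1
  | k + 1 =>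
      s (2 * (k + 1) + 1) -
        (Matrix.of fun (a : Fin q) (r : Fin (k + 1) × Fin q) => s (k + 2 + r.1.1) a r.2) *
          (Kmat q s k)⁻¹ *
          (Matrix.of fun (p : Fin (k + 1) × Fin q) (b : Fin q) => s (k + 2 + p.1.1) p.2 b)

/-- Stieltjes parametrization `𝔮_j`. -/
def qpar (q : ℕ) (s : ℕ → Mq q) (j : ℕ) : Mq q :=
  if j % 2 = 0 then qEven q s (j / 2) else qOdd q s (j / 2)

/-- Reciprocal sequence `s^♯`. -/
def reciprocal (q : ℕ) (s : ℕ → Mq q) : ℕ → Mq q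
  | 0 => (s 0)⁻¹
  | j + 1 =>
      -(s 0)⁻¹ *
        ∑ l ∈ (Finset.range (j + 1)).attach, s (j + 1 - l.1) * reciprocal q s l.1
  decreasing_by exact Finset.mem_range.mp l.2

/-- First Kátětov transform `s^{(1)}_j = −s_0 s_{j+1}^♯ s_0`. -/
def katetov1 (q : ℕ) (s : ℕ → Mq q) : ℕ → Mq q :=
  fun j => -(s 0) * reciprocal q s (j + 1) * s 0

/-- `ℓ`-th Kátětov transform (the `ℓ`-fold iterate of the first Kátětov transform). -/
def katetov (q : ℕ) (ℓ : ℕ) (s : ℕ → Mq q) : ℕ → Mq q :=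
  (katetov1 q)^[ℓ] s

/-- `v_k = col(I_q, 0_{kq×q})`. -/
def vcol (q k : ℕ) : Matrix (Fin (k + 1) × Fin q) (Fin q) ℂ :=
  Matrix.of fun p b => if p.1.1 = 0 ∧ p.2 = b then 1 else 0

/-- `y_{0,k} = col(s_0, …, s_k)`. -/
def ycol (q : ℕ) (s : ℕ → Mq q) (k : ℕ) : Matrix (Fin (k + 1) × Fin q) (Fin q) ℂ :=
  Matrix.of fun p b => s p.1.1 p.2 b

/-- Dyukarev–Stieltjes parameters `𝔐_k`. -/
def DSM (q : ℕ) (s : ℕ → Mq q) : ℕ → Mq q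
  | 0 => (s 0)⁻¹
  | k + 1 =>
      (vcol q (k + 1))ᴴ * (Hmat q s (k + 1))⁻¹ * vcol q (k + 1) -
        (vcol q k)ᴴ * (Hmat q s k)⁻¹ * vcol q k

/-- Dyukarev–Stieltjes parameters `𝔏_k`. -/
def DSL (q : ℕ) (s : ℕ → Mq q) : ℕ → Mq q
  | 0 => s 0 * (s 1)⁻¹ * s 0
  | k + 1 =>
      (ycol q s (k + 1))ᴴ * (Kmat q s (k + 1))⁻¹ * ycol q s (k + 1) -
        (ycol q s k)ᴴ * (Kmat q s k)⁻¹ * ycol q s k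

/-- Ordered product `A_0 A_1 ⋯ A_n`. -/
def oprod {α : Type*} [Monoid α] (f : ℕ → α) (n : ℕ) : α :=
  ((List.range (n + 1)).map f).prod

/-- Block shift `T_n = (δ_{j,k+1} I_q)_{j,k=0}^n`. -/
def Tmat (q n : ℕ) : Matrix (Fin (n + 1) × Fin q) (Fin (n + 1) × Fin q) ℂ :=
  Matrix.of fun p r => if p.1.1 = r.1.1 + 1 ∧ p.2 = r.2 then 1 else 0

/-- `R_n(z) = (I_{(n+1)q} − z T_n)⁻¹`. -/
def Rmat (q n : ℕ) (z : ℂ) : Matrix (Fin (n + 1) × Fin q) (Fin (n + 1) × Fin q) ℂ :=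
  (1 - z • Tmat q n)⁻¹

/-- `u_0 = 0`, `u_n = col(0_{q×q}, −y_{0,n−1})`. -/
def ucol (q : ℕ) (s : ℕ → Mq q) (n : ℕ) : Matrix (Fin (n + 1) × Fin q) (Fin q) ℂ :=
  Matrix.of fun p b => if p.1.1 = 0 then 0 else -(s (p.1.1 - 1) p.2 b)

/-- `col(−H_n⁻¹ y_{n+1,2n+1}, I_q)` of size `(n+2)q × q`. -/
def colH (q : ℕ) (s : ℕ → Mq q) (n : ℕ) : Matrix (Fin (n + 2) × Fin q) (Fin q) ℂ :=
  Matrix.of fun p b =>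
    if h : p.1.1 < n + 1 then
      (-((Hmat q s n)⁻¹ *
          Matrix.of fun (r : Fin (n + 1) × Fin q) (c : Fin q) => s (n + 1 + r.1.1) r.2 c))
        (⟨p.1.1, h⟩, p.2) b
    else if p.2 = b then 1 else 0

/-- `col(−K_n⁻¹ y_{n+2,2n+2}, I_q)` of size `(n+2)q × q`. -/
def colK (q : ℕ) (s : ℕ → Mq q) (n : ℕ) : Matrix (Fin (n + 2) × Fin q) (Fin q) ℂ :=
  Matrix.of fun p b =>
    if h : p.1.1 < n + 1 then
      (-((Kmat q s n)⁻¹ *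
          Matrix.of fun (r : Fin (n + 1) × Fin q) (c : Fin q) => s (n + 2 + r.1.1) r.2 c))
        (⟨p.1.1, h⟩, p.2) b
    else if p.2 = b then 1 else 0

/-- `z_{0,n} = row(s_0, …, s_n)`. -/
def zrow (q : ℕ) (s : ℕ → Mq q) (n : ℕ) : Matrix (Fin q) (Fin (n + 1) × Fin q) ℂ :=
  Matrix.of fun a r => s r.1.1 a r.2

/-- Orthogonal matrix polynomials `P_n`. -/
def Ppoly (q : ℕ) (s : ℕ → Mq q) : ℕ → ℂ → Mq q
  | 0, _ => 1
  | n + 1, z => (vcol q (n + 1))ᴴ * (Rmat q (n + 1) (starRingEnd ℂ z))ᴴ * colH q s n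

/-- Second kind matrix polynomials `Q_n`. -/
def Qpoly (q : ℕ) (s : ℕ → Mq q) : ℕ → ℂ → Mq q
  | 0, _ => 0
  | n + 1, z => -((ucol q s (n + 1))ᴴ * (Rmat q (n + 1) (starRingEnd ℂ z))ᴴ * colH q s n)

/-- Matrix polynomials `P̂_n`. -/
def Phat (q : ℕ) (s : ℕ → Mq q) : ℕ → ℂ → Mq q
  | 0, _ => 1
  | n + 1, z => (vcol q (n + 1))ᴴ * (Rmat q (n + 1) (starRingEnd ℂ z))ᴴ * colK q s n

/-- Matrix polynomials `Q̂_n`. -/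
def Qhat (q : ℕ) (s : ℕ → Mq q) : ℕ → ℂ → Mq q
  | 0, _ => s 0
  | n + 1, z => zrow q s (n + 1) * (Rmat q (n + 1) (starRingEnd ℂ z))ᴴ * colK q s n

/-- `α_n(z)`. -/
def alphaP (q : ℕ) (s : ℕ → Mq q) (n : ℕ) (z : ℂ) : Mq q :=
  1 - z • ((ucol q s n)ᴴ * (Rmat q n (starRingEnd ℂ z))ᴴ * (Hmat q s n)⁻¹ * vcol q n)

/-- `γ_n(z)`. -/
def gammaP (q : ℕ) (s : ℕ → Mq q) (n : ℕ) (z : ℂ) : Mq q :=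
  -(z • ((vcol q n)ᴴ * (Rmat q n (starRingEnd ℂ z))ᴴ * (Hmat q s n)⁻¹ * vcol q n))

/-- `β_n(z)`. -/
def betaP (q : ℕ) (s : ℕ → Mq q) : ℕ → ℂ → Mq q
  | 0, _ => 0
  | n + 1, z => (ycol q s n)ᴴ * (Rmat q n (starRingEnd ℂ z))ᴴ * (Kmat q s n)⁻¹ * ycol q s n

/-- `δ_n(z)`. -/
def deltaP (q : ℕ) (s : ℕ → Mq q) : ℕ → ℂ → Mq q
  | 0, _ => 1
  | n + 1, z =>
      1 + z • ((vcol q n)ᴴ * (Rmat q n (starRingEnd ℂ z))ᴴ * (Kmat q s n)⁻¹ * ycol q s n)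

/-- The resolvent matrices `U_m(z)`. -/
def Umat (q : ℕ) (s : ℕ → Mq q) (m : ℕ) (z : ℂ) : M2q q :=
  if m % 2 = 0 then
    Matrix.fromBlocks (alphaP q s (m / 2) z) (betaP q s (m / 2) z)
      (gammaP q s (m / 2) z) (deltaP q s (m / 2) z)
  else
    Matrix.fromBlocks (alphaP q s (m / 2) z) (betaP q s (m / 2 + 1) z)
      (gammaP q s (m / 2) z) (deltaP q s (m / 2 + 1) z)

/-- `𝕄_k(z) = [[I, 0], [−z𝔐_k, I]]`. -/
def MM (q : ℕ) (s : ℕ → Mq q) (k : ℕ) (z : ℂ) : M2q q :=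
  Matrix.fromBlocks 1 0 (-(z • DSM q s k)) 1

/-- `𝕃_k = [[I, 𝔏_k], [0, I]]`. -/
def LL (q : ℕ) (s : ℕ → Mq q) (k : ℕ) : M2q q :=
  Matrix.fromBlocks 1 (DSL q s k) 0 1

/-- `𝒫_n = diag([P_n(0)]^{−*}, P_n(0))`. -/
def PPmat (q : ℕ) (s : ℕ → Mq q) (n : ℕ) : M2q q :=
  Matrix.fromBlocks (((Ppoly q s n 0)⁻¹)ᴴ) 0 0 (Ppoly q s n 0)

/-- `𝐐_n(z) = [[0, Q̂_n(0)], [−z[Q̂_n(0)]^{−*}, 0]]`. -/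
def QQgen (q : ℕ) (s : ℕ → Mq q) (n : ℕ) (z : ℂ) : M2q q :=
  Matrix.fromBlocks 0 (Qhat q s n 0) (-(z • ((Qhat q s n 0)⁻¹)ᴴ)) 0

/-- `𝐐_0^{(ℓ)}(z) = [[0, s_0^{(ℓ)}], [−z(s_0^{(ℓ)})⁻¹, 0]]`. -/
def QQ0 (q : ℕ) (s : ℕ → Mq q) (ℓ : ℕ) (z : ℂ) : M2q q :=
  Matrix.fromBlocks 0 (katetov q ℓ s 0) (-(z • (katetov q ℓ s 0)⁻¹)) 0

/-- `𝒬_m(z) = 𝐐_0^{(0)}(z) ⋯ 𝐐_0^{(m)}(z)`. -/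
def Qprod (q : ℕ) (s : ℕ → Mq q) (m : ℕ) (z : ℂ) : M2q q :=
  oprod (fun ℓ => QQ0 q s ℓ z) m


/-!
Put `S = ∑ sⱼ Xʲ`, so that the reciprocal sequence is the coefficient sequence of `S⁻¹`. With the
block lower and upper triangular Toeplitz matrices `D` and `E` of symbols `S s₀⁻¹` and `s₀⁻¹ S`,
a power series computation gives `Kₙ = D Hₙ⁽¹⁾ E` and `Hₙ₊₁ / s₀ = D Kₙ⁽¹⁾ E`, where `Hₙ₊₁ / s₀`
is the Schur complement of the first block `s₀` in `Hₙ₊₁`.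

`L_k` is the Schur complement of `H_{k-1}` in `H_k`, and `Λ_k` that of `K_{k-1}` in `K_k`. Such
trailing Schur complements do not change under multiplication by `D` and `E`, whose diagonal
blocks are identities, nor (quotient formula) under passing from `Hₙ₊₁` to `Hₙ₊₁ / s₀`. Hence
`L_k⁽¹⁾`, read off from `H_k⁽¹⁾`, can be read off from `K_k` and is `Λ_k`; and `Λ_k⁽¹⁾`, read off
from `K_k⁽¹⁾`, can be read off from `H_{k+1} / s₀`, hence from `H_{k+1}`, and is `L_{k+1}`.
-/

namespace Matrix

variable {m m' p R : Type*} [Fintype m] [Fintype p] [DecidableEq p]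

section Semiring

variable [Semiring R] [StarRing R]

/-- For `A = [[A₁₁, A₁₂], [A₂₁, A₂₂]]` with `A₁₁` invertible and `e = [0; 1]`, the only such `g`
is the Schur complement `A₂₂ - A₂₁ A₁₁⁻¹ A₁₂`, witnessed by `w = [-A₁₁⁻¹ A₁₂; 1]`. -/
def IsSchurComplement (A : Matrix m m R) (e : Matrix m p R) (g : Matrix p p R) : Prop :=
  ∃ w : Matrix m p R, A * w = e * g ∧ eᴴ * w = 1

theorem isSchurComplement_one (g : Matrix p p R) : IsSchurComplement g 1 g :=
  ⟨1, by simp⟩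

namespace IsSchurComplement

variable {A : Matrix m m R} {e : Matrix m p R} {g g' : Matrix p p R}

theorem conjTranspose_eq (hA : A.IsHermitian) (h : IsSchurComplement A e g)
    (h' : IsSchurComplement A e g') : g' = gᴴ := by
  obtain ⟨w, hw, hew⟩ := h
  obtain ⟨w', hw', hew'⟩ := h'
  calc g' = (eᴴ * w)ᴴ * g' := by rw [hew, conjTranspose_one, Matrix.one_mul]
    _ = wᴴ * (A * w') := by
      rw [hw', conjTranspose_mul, conjTranspose_conjTranspose, Matrix.mul_assoc]
    _ = (A * w)ᴴ * w' := by rw [conjTranspose_mul, hA.eq, Matrix.mul_assoc]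
    _ = gᴴ := by rw [hw, conjTranspose_mul, Matrix.mul_assoc, hew', Matrix.mul_one]

theorem unique (hA : A.IsHermitian) (h : IsSchurComplement A e g)
    (h' : IsSchurComplement A e g') : g = g' := by
  rw [h.conjTranspose_eq hA h', ← h.conjTranspose_eq hA h]

theorem of_submatrix [Fintype m'] (σ : m' ≃ m)
    (h : IsSchurComplement (A.submatrix σ σ) (e.submatrix σ id) g) :
    IsSchurComplement A e g := by
  obtain ⟨w, hw, hew⟩ := h
  refine ⟨w.submatrix σ.symm id, ?_, ?_⟩
  · have hA : A = (A.submatrix σ σ).submatrix σ.symm σ.symm := by simp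
    have he : e.submatrix σ id * g = (e * g).submatrix σ id := by ext; simp [mul_apply]
    rw [hA, submatrix_mul_equiv, hw, he, submatrix_submatrix]
    simp
  · have he : eᴴ = (eᴴ.submatrix id σ).submatrix id σ.symm := by simp
    rw [he, submatrix_mul_equiv, ← conjTranspose_submatrix, hew, submatrix_id_id]

end IsSchurComplement

end Semiring

namespace IsSchurComplement

variable [CommRing R] [StarRing R] {e : Matrix m p R} {g : Matrix p p R}

theorem mul_mul [DecidableEq m] {B P Q : Matrix m m R} (h : IsSchurComplement B e g)
    (hP : P * e = e) (hQ : eᴴ * Q = eᴴ) (hQu : IsUnit Q.det) :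
    IsSchurComplement (P * B * Q) e g := by
  obtain ⟨w, hw, hew⟩ := h
  refine ⟨Q⁻¹ * w, ?_, ?_⟩
  · rw [Matrix.mul_assoc, Matrix.mul_nonsing_inv_cancel_left _ _ hQu, Matrix.mul_assoc, hw,
      ← Matrix.mul_assoc, hP]
  · rw [← hQ, Matrix.mul_assoc, Matrix.mul_nonsing_inv_cancel_left _ _ hQu, hew]

theorem fromBlocks {n : Type*} [Fintype n] [DecidableEq n] {A : Matrix n n R}
    {B : Matrix n m R} {C : Matrix m n R} {D : Matrix m m R} (hA : IsUnit A.det)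
    (h : IsSchurComplement (D - C * A⁻¹ * B) e g) :
    IsSchurComplement (Matrix.fromBlocks A B C D) (fromRows 0 e) g := by
  obtain ⟨w, hw, hew⟩ := h
  refine ⟨fromRows (-(A⁻¹ * B * w)) w, ?_, ?_⟩
  · rw [fromBlocks_mul_fromRows, fromRows_mul, Matrix.zero_mul, ← hw]
    congr 1
    · rw [Matrix.mul_neg, ← Matrix.mul_assoc, ← Matrix.mul_assoc,
        Matrix.mul_nonsing_inv _ hA, Matrix.one_mul, neg_add_cancel]
    · rw [Matrix.sub_mul, Matrix.mul_neg, ← Matrix.mul_assoc, ← Matrix.mul_assoc]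
      abel
  · rw [conjTranspose_fromRows_eq_fromCols_conjTranspose, fromCols_mul_fromRows,
      conjTranspose_zero, Matrix.zero_mul, zero_add, hew]

end IsSchurComplement

end Matrix

open PowerSeries Finset

theorem Finset.sum_range_ite_le {M : Type*} [AddCommMonoid M] {n k : ℕ} (hk : k ≤ n)
    (f : ℕ → M) :
    ∑ a ∈ range (n + 1), (if a ≤ k then f a else 0) = ∑ a ∈ range (k + 1), f a := by
  rw [← sum_filter]
  congr 1
  ext a
  simp only [mem_filter, mem_range]
  omega

namespace PowerSeries

section Semiring

variable {R : Type*} [Semiring R]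

theorem coeff_mul_eq_sum_range (φ ψ : R⟦X⟧) (n : ℕ) :
    coeff n (φ * ψ) = ∑ l ∈ range (n + 1), coeff l φ * coeff (n - l) ψ := by
  rw [coeff_mul, Nat.sum_antidiagonal_eq_sum_range_succ (fun a b => coeff a φ * coeff b ψ)]

theorem coeff_mul_eq_sum_range' (φ ψ : R⟦X⟧) (n : ℕ) :
    coeff n (φ * ψ) = ∑ l ∈ range (n + 1), coeff (n - l) φ * coeff l ψ := by
  rw [coeff_mul, ← Nat.sum_antidiagonal_swap]
  exact Nat.sum_antidiagonal_eq_sum_range_succ (fun a b => coeff b φ * coeff a ψ) n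

theorem sum_mul_coeff_X_pow_mul {n k : ℕ} (hk : k ≤ n) (e : ℕ → R) (g : R⟦X⟧) :
    ∑ a ∈ range (n + 1), e a * coeff k (X ^ a * g) = coeff k (mk e * g) := by
  simp only [coeff_X_pow_mul', mul_ite, mul_zero]
  rw [sum_range_ite_le hk, coeff_mul_eq_sum_range]
  simp only [coeff_mk]

theorem sum_coeff_X_pow_mul_mul {n j : ℕ} (hj : j ≤ n) (f : R⟦X⟧) (e : ℕ → R) :
    ∑ a ∈ range (n + 1), coeff j (X ^ a * f) * e a = coeff j (f * mk e) := by
  simp only [coeff_X_pow_mul', ite_mul, zero_mul]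
  rw [sum_range_ite_le hj, coeff_mul_eq_sum_range']
  simp only [coeff_mk]

end Semiring

theorem coeff_mk_coeff_succ_mul {R : Type*} [Ring R] (φ ψ : R⟦X⟧) (k : ℕ) :
    coeff k (mk (fun b => coeff (b + 1) φ) * ψ) =
      coeff (k + 1) (φ * ψ) - constantCoeff φ * coeff (k + 1) ψ := by
  have h := congrArg (fun φ => coeff (k + 1) (φ * ψ)) (eq_X_mul_shift_add_const φ)
  simp only [add_mul, mul_assoc, map_add, coeff_succ_X_mul, coeff_C_mul] at h
  rw [h, add_sub_cancel_right]

section Matrix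

variable {n α : Type*} [Fintype n] [DecidableEq n] [CommRing α] {M : Matrix n n α}

theorem C_mul_C_nonsing_inv (h : IsUnit M.det) : C M * C M⁻¹ = 1 := by
  rw [← map_mul, mul_nonsing_inv _ h, map_one]

theorem C_nonsing_inv_mul_C (h : IsUnit M.det) : C M⁻¹ * C M = 1 := by
  rw [← map_mul, nonsing_inv_mul _ h, map_one]

end Matrix

end PowerSeries

section BlockMatrices

variable {q : ℕ}

def blockMatrix (q n : ℕ) (E : ℕ → ℕ → Mq q) :
    Matrix (Fin (n + 1) × Fin q) (Fin (n + 1) × Fin q) ℂ :=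
  Matrix.of fun p r => E p.1 r.1 p.2 r.2

def lastBlock (q n : ℕ) : Matrix (Fin (n + 1) × Fin q) (Fin q) ℂ :=
  Matrix.of fun p b => if p.1 = Fin.last n then (1 : Mq q) p.2 b else 0

theorem blockMatrix_congr {n : ℕ} {E F : ℕ → ℕ → Mq q}
    (h : ∀ j ≤ n, ∀ k ≤ n, E j k = F j k) : blockMatrix q n E = blockMatrix q n F := by
  ext p r
  simp only [blockMatrix, of_apply, h p.1 (Nat.lt_succ_iff.1 p.1.2) r.1 (Nat.lt_succ_iff.1 r.1.2)]

theorem blockMatrix_mul_blockMatrix {n : ℕ} (E F : ℕ → ℕ → Mq q) :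
    blockMatrix q n E * blockMatrix q n F =
      blockMatrix q n (fun j k => ∑ a ∈ range (n + 1), E j a * F a k) := by
  ext p r
  simp only [blockMatrix, mul_apply, of_apply, Matrix.sum_apply, Fintype.sum_prod_type,
    ← Fin.sum_univ_eq_sum_range]

theorem blockMatrix_mul_lastBlock {n : ℕ} (E : ℕ → ℕ → Mq q) :
    blockMatrix q n E * lastBlock q n = Matrix.of fun p b => E p.1 n p.2 b := by
  ext p b
  simp [blockMatrix, lastBlock, mul_apply, Fintype.sum_prod_type, one_apply]

theorem conjTranspose_lastBlock_mul_blockMatrix {n : ℕ} (E : ℕ → ℕ → Mq q) :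
    (lastBlock q n)ᴴ * blockMatrix q n E = Matrix.of fun b r => E n r.1 b r.2 := by
  ext b r
  simp [blockMatrix, lastBlock, mul_apply, Fintype.sum_prod_type, one_apply, apply_ite]

theorem blockMatrix_one {n : ℕ} :
    blockMatrix q n (fun j k => if j = k then 1 else 0) = 1 := by
  ext p r
  simp only [blockMatrix, of_apply, one_apply, Prod.ext_iff, ← Fin.ext_iff]
  split_ifs <;> simp_all [one_apply]

end BlockMatrices

section Toeplitz

variable {q n : ℕ}

def lowerToeplitz (q n : ℕ) (f : (Mq q)⟦X⟧) :
    Matrix (Fin (n + 1) × Fin q) (Fin (n + 1) × Fin q) ℂ :=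
  blockMatrix q n fun j k => coeff j (X ^ k * f)

def upperToeplitz (q n : ℕ) (g : (Mq q)⟦X⟧) :
    Matrix (Fin (n + 1) × Fin q) (Fin (n + 1) × Fin q) ℂ :=
  blockMatrix q n fun j k => coeff k (X ^ j * g)

theorem blockMatrix_mul_upperToeplitz (E : ℕ → ℕ → Mq q) (g : (Mq q)⟦X⟧) :
    blockMatrix q n E * upperToeplitz q n g =
      blockMatrix q n fun j k => coeff k (mk (E j) * g) := by
  rw [upperToeplitz, blockMatrix_mul_blockMatrix]
  exact blockMatrix_congr fun j _ k hk => sum_mul_coeff_X_pow_mul hk _ _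

theorem lowerToeplitz_mul_blockMatrix (f : (Mq q)⟦X⟧) (E : ℕ → ℕ → Mq q) :
    lowerToeplitz q n f * blockMatrix q n E =
      blockMatrix q n fun j k => coeff j (f * mk (E · k)) := by
  rw [lowerToeplitz, blockMatrix_mul_blockMatrix]
  exact blockMatrix_congr fun j hj k _ => sum_coeff_X_pow_mul_mul hj _ _

theorem upperToeplitz_mul_upperToeplitz (f g : (Mq q)⟦X⟧) :
    upperToeplitz q n f * upperToeplitz q n g = upperToeplitz q n (f * g) := by
  conv_lhs => rw [upperToeplitz, blockMatrix_mul_upperToeplitz]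
  refine blockMatrix_congr fun j _ k _ => ?_
  rw [show mk (fun b => coeff b (X ^ j * f)) = X ^ j * f from ext fun _ => coeff_mk _ _,
    mul_assoc]

theorem upperToeplitz_one : upperToeplitz q n 1 = 1 := by
  rw [upperToeplitz, ← blockMatrix_one]
  refine blockMatrix_congr fun j _ k _ => ?_
  simp [coeff_X_pow, eq_comm]

theorem lowerToeplitz_mul_lastBlock {f : (Mq q)⟦X⟧} (hf : constantCoeff f = 1) :
    lowerToeplitz q n f * lastBlock q n = lastBlock q n := by
  rw [lowerToeplitz, blockMatrix_mul_lastBlock]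
  ext ⟨⟨j, hj⟩, x⟩ b
  rcases (Nat.lt_succ_iff.1 hj).eq_or_lt with rfl | hlt
  · simp [lastBlock, coeff_X_pow_mul', hf, Fin.ext_iff]
  · simp [lastBlock, coeff_X_pow_mul', Fin.ext_iff, hlt.not_ge, hlt.ne]

theorem conjTranspose_lastBlock_mul_upperToeplitz {g : (Mq q)⟦X⟧} (hg : constantCoeff g = 1) :
    (lastBlock q n)ᴴ * upperToeplitz q n g = (lastBlock q n)ᴴ := by
  rw [upperToeplitz, conjTranspose_lastBlock_mul_blockMatrix]
  ext b ⟨⟨k, hk⟩, y⟩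
  rcases (Nat.lt_succ_iff.1 hk).eq_or_lt with rfl | hlt
  · simp [lastBlock, coeff_X_pow_mul', hg, Fin.ext_iff, one_apply, eq_comm]
  · simp [lastBlock, coeff_X_pow_mul', Fin.ext_iff, hlt.not_ge, hlt.ne]

end Toeplitz

section HankelSplit

variable {q : ℕ}

def splitLast (q n : ℕ) : (Fin (n + 1) × Fin q) ⊕ Fin q ≃ Fin (n + 2) × Fin q :=
  (Equiv.sumCongr (Equiv.refl _) (Equiv.uniqueProd (Fin q) (Fin 1)).symm).trans
    ((Equiv.sumProdDistrib _ _ _).symm.trans (Equiv.prodCongr finSumFinEquiv (Equiv.refl _)))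

def splitFirst (q n : ℕ) : Fin q ⊕ (Fin (n + 1) × Fin q) ≃ Fin (n + 2) × Fin q :=
  (Equiv.sumCongr (Equiv.uniqueProd (Fin q) (Fin 1)).symm (Equiv.refl _)).trans
    ((Equiv.sumProdDistrib _ _ _).symm.trans
      (Equiv.prodCongr (finSumFinEquiv.trans (finCongr (Nat.add_comm 1 (n + 1))))
        (Equiv.refl _)))

theorem Hmat_zero_submatrix (r : ℕ → Mq q) :
    (Hmat q r 0).submatrix (Equiv.uniqueProd (Fin q) (Fin 1)).symm
      (Equiv.uniqueProd (Fin q) (Fin 1)).symm = r 0 := by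
  ext x y
  simp [Hmat]

theorem lastBlock_zero_submatrix :
    (lastBlock q 0).submatrix (Equiv.uniqueProd (Fin q) (Fin 1)).symm id = 1 := by
  ext x y
  simp [lastBlock]

theorem Hmat_submatrix_splitLast (r : ℕ → Mq q) (n : ℕ) :
    (Hmat q r (n + 1)).submatrix (splitLast q n) (splitLast q n) =
      fromBlocks (Hmat q r n)
        (Matrix.of fun (p : Fin (n + 1) × Fin q) (b : Fin q) => r (n + 1 + p.1.1) p.2 b)
        (Matrix.of fun (a : Fin q) (p : Fin (n + 1) × Fin q) => r (n + 1 + p.1.1) a p.2)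
        (r (2 * (n + 1))) := by
  ext (⟨i, x⟩ | x) (⟨j, y⟩ | y) <;> simp [splitLast, Hmat, add_comm, two_mul]

theorem lastBlock_submatrix_splitLast (n : ℕ) :
    (lastBlock q (n + 1)).submatrix (splitLast q n) id = fromRows 0 1 := by
  ext (⟨i, x⟩ | x) y
  · simp [splitLast, lastBlock, Fin.ext_iff, i.isLt.ne]
  · simp [splitLast, lastBlock, Fin.ext_iff]

theorem Hmat_submatrix_splitFirst (r : ℕ → Mq q) (n : ℕ) :
    (Hmat q r (n + 1)).submatrix (splitFirst q n) (splitFirst q n) =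
      fromBlocks (r 0)
        (Matrix.of fun (a : Fin q) (p : Fin (n + 1) × Fin q) => r (p.1.1 + 1) a p.2)
        (Matrix.of fun (p : Fin (n + 1) × Fin q) (b : Fin q) => r (p.1.1 + 1) p.2 b)
        (Hmat q (fun i => r (i + 2)) n) := by
  ext (x | ⟨i, x⟩) (y | ⟨j, y⟩) <;> simp [splitFirst, Hmat, add_comm, add_left_comm, add_assoc]

theorem lastBlock_submatrix_splitFirst (n : ℕ) :
    (lastBlock q (n + 1)).submatrix (splitFirst q n) id = fromRows 0 (lastBlock q n) := by
  ext (x | ⟨i, x⟩) y <;> simp [splitFirst, lastBlock, Fin.ext_iff]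

end HankelSplit

section SchurComplements

variable {q : ℕ}

theorem isSchurComplement_qEven (r : ℕ → Mq q) (k : ℕ)
    (hr : ∀ n < k, IsUnit (Hmat q r n).det) :
    IsSchurComplement (Hmat q r k) (lastBlock q k) (qEven q r k) := by
  cases k with
  | zero =>
    refine .of_submatrix (Equiv.uniqueProd (Fin q) (Fin 1)).symm ?_
    rw [Hmat_zero_submatrix, lastBlock_zero_submatrix]
    exact isSchurComplement_one _
  | succ k =>
    refine .of_submatrix (splitLast q k) ?_
    rw [Hmat_submatrix_splitLast, lastBlock_submatrix_splitLast]
    exact .fromBlocks (hr k k.lt_succ_self) (isSchurComplement_one _)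

theorem Kmat_eq_Hmat_shift (s : ℕ → Mq q) (n : ℕ) :
    Kmat q s n = Hmat q (fun i => s (i + 1)) n :=
  rfl

theorem qOdd_eq_qEven_shift (s : ℕ → Mq q) (k : ℕ) :
    qOdd q s k = qEven q (fun i => s (i + 1)) k := by
  cases k with
  | zero => rfl
  | succ k =>
    rw [qOdd, qEven, Kmat_eq_Hmat_shift]
    simp only [add_right_comm _ _ 1, add_assoc]

theorem isSchurComplement_qOdd (s : ℕ → Mq q) (k : ℕ)
    (hs : ∀ n < k, IsUnit (Kmat q s n).det) :
    IsSchurComplement (Kmat q s k) (lastBlock q k) (qOdd q s k) := by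
  rw [qOdd_eq_qEven_shift]
  exact isSchurComplement_qEven (fun i => s (i + 1)) k hs

def hankelSchurComplement (q : ℕ) (s : ℕ → Mq q) (n : ℕ) :
    Matrix (Fin (n + 1) × Fin q) (Fin (n + 1) × Fin q) ℂ :=
  Hmat q (fun i => s (i + 2)) n -
    (Matrix.of fun (p : Fin (n + 1) × Fin q) (b : Fin q) => s (p.1.1 + 1) p.2 b) * (s 0)⁻¹ *
      (Matrix.of fun (a : Fin q) (p : Fin (n + 1) × Fin q) => s (p.1.1 + 1) a p.2)

theorem hankelSchurComplement_eq_blockMatrix (s : ℕ → Mq q) (n : ℕ) :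
    hankelSchurComplement q s n =
      blockMatrix q n fun j k => s (j + k + 2) - s (j + 1) * (s 0)⁻¹ * s (k + 1) := by
  ext p r
  simp [hankelSchurComplement, blockMatrix, Hmat, mul_apply, sum_mul]

theorem Matrix.IsSchurComplement.Hmat_succ {s : ℕ → Mq q} {n : ℕ} {g : Mq q}
    (h0 : IsUnit (s 0).det)
    (h : IsSchurComplement (hankelSchurComplement q s n) (lastBlock q n) g) :
    IsSchurComplement (Hmat q s (n + 1)) (lastBlock q (n + 1)) g := by
  refine .of_submatrix (splitFirst q n) ?_
  rw [Hmat_submatrix_splitFirst, lastBlock_submatrix_splitFirst]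
  exact h.fromBlocks h0

theorem isUnit_det_hankelSchurComplement {s : ℕ → Mq q} {n : ℕ} (h0 : IsUnit (s 0).det)
    (h : IsUnit (Hmat q s (n + 1)).det) : IsUnit (hankelSchurComplement q s n).det := by
  have := invertibleOfIsUnitDet _ h0
  rw [← det_submatrix_equiv_self (splitFirst q n), Hmat_submatrix_splitFirst,
    det_fromBlocks₁₁, invOf_eq_nonsing_inv] at h
  exact (IsUnit.mul_iff.1 h).2

end SchurComplements

section Katetov

variable {q : ℕ}

theorem reciprocal_zero (s : ℕ → Mq q) : reciprocal q s 0 = (s 0)⁻¹ := by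
  rw [reciprocal]

theorem reciprocal_succ (s : ℕ → Mq q) (j : ℕ) :
    reciprocal q s (j + 1) =
      -(s 0)⁻¹ * ∑ l ∈ range (j + 1), s (j + 1 - l) * reciprocal q s l := by
  rw [reciprocal, sum_attach (range (j + 1)) fun l => s (j + 1 - l) * reciprocal q s l]

variable {s : ℕ → Mq q} (h0 : IsUnit (s 0).det)
include h0

theorem mk_mul_mk_reciprocal : mk s * mk (reciprocal q s) = 1 := by
  ext m
  rw [coeff_mul_eq_sum_range', coeff_one]
  cases m with
  | zero => simp [reciprocal_zero, mul_nonsing_inv _ h0]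
  | succ j =>
    rw [sum_range_succ, Nat.sub_self, coeff_mk, coeff_mk, reciprocal_succ, ← mul_assoc,
      mul_neg, mul_nonsing_inv _ h0, neg_one_mul, if_neg j.succ_ne_zero]
    simp only [coeff_mk]
    exact add_neg_cancel _

theorem mk_reciprocal_mul_mk : mk (reciprocal q s) * mk s = 1 := by
  obtain ⟨u, hu⟩ : IsUnit (mk s) :=
    isUnit_iff_constantCoeff.2 ((Matrix.isUnit_iff_isUnit_det _).2 h0)
  have h := mk_mul_mk_reciprocal h0
  rw [← hu] at h ⊢
  rw [← Units.mul_eq_one_iff_inv_eq.1 h, Units.inv_mul]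

/-- Coefficient `j + b + 1` of `S * S⁻¹ = 1`, split after its first `b + 1` terms. -/
theorem coeff_mul_mk_reciprocal_tail_add (j b : ℕ) :
    coeff j (mk s * mk fun a => reciprocal q s (a + b + 1)) +
      coeff b (mk (fun c => s (j + 1 + c)) * mk (reciprocal q s)) = 0 := by
  have h := congrArg (coeff (j + b + 1)) (mk_mul_mk_reciprocal h0)
  rw [coeff_one, if_neg (Nat.succ_ne_zero _), coeff_mul_eq_sum_range',
    show j + b + 1 + 1 = (b + 1) + (j + 1) by omega, sum_range_add] at h
  rw [← h, add_comm, coeff_mul_eq_sum_range', coeff_mul_eq_sum_range']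
  congr 1 <;> refine sum_congr rfl fun l hl => ?_ <;> simp only [coeff_mk] <;>
    rw [mem_range] at hl <;> congr 2 <;> omega

theorem coeff_mul_mk_katetov1 (j b : ℕ) :
    coeff j (mk s * C (s 0)⁻¹ * mk fun a => katetov1 q s (a + b)) =
      coeff b (mk (fun c => s (j + 1 + c)) * mk (reciprocal q s) * C (s 0)) := by
  have hk : (mk fun a => katetov1 q s (a + b)) =
      -(C (s 0) * (mk fun a => reciprocal q s (a + b + 1)) * C (s 0)) := by
    ext a
    simp [katetov1, coeff_mul_C, coeff_C_mul, add_right_comm a b 1, mul_assoc]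
  rw [hk, mul_neg, ← mul_assoc, ← mul_assoc, mul_assoc (mk s), C_nonsing_inv_mul_C h0, mul_one,
    map_neg, coeff_mul_C, coeff_mul_C, ← neg_mul,
    eq_neg_of_add_eq_zero_left (coeff_mul_mk_reciprocal_tail_add h0 j b), neg_neg]

theorem mul_mk_reciprocal_mul_C_cancel (φ : (Mq q)⟦X⟧) :
    φ * mk (reciprocal q s) * C (s 0) * (C (s 0)⁻¹ * mk s) = φ := by
  rw [mul_assoc _ (C (s 0)), ← mul_assoc (C (s 0)), C_mul_C_nonsing_inv h0, one_mul, mul_assoc,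
    mk_reciprocal_mul_mk h0, mul_one]

theorem Kmat_eq_mul_Hmat_katetov1_mul (n : ℕ) :
    Kmat q s n = lowerToeplitz q n (mk s * C (s 0)⁻¹) * Hmat q (katetov1 q s) n *
      upperToeplitz q n (C (s 0)⁻¹ * mk s) := by
  have hH : Hmat q (katetov1 q s) n = blockMatrix q n fun a b => katetov1 q s (a + b) := rfl
  have hK : Kmat q s n = blockMatrix q n fun j k => s (j + k + 1) := rfl
  rw [hK, hH, lowerToeplitz_mul_blockMatrix, blockMatrix_mul_upperToeplitz]
  refine blockMatrix_congr fun j _ k _ => ?_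
  have hrow : (mk fun b => coeff j (mk s * C (s 0)⁻¹ * mk fun a => katetov1 q s (a + b))) =
      mk (fun c => s (j + 1 + c)) * mk (reciprocal q s) * C (s 0) :=
    ext fun b => by rw [coeff_mk, coeff_mul_mk_katetov1 h0]
  rw [hrow, mul_mk_reciprocal_mul_C_cancel h0, coeff_mk, add_right_comm, add_assoc]

theorem hankelSchurComplement_eq_mul_Kmat_katetov1_mul (n : ℕ) :
    hankelSchurComplement q s n = lowerToeplitz q n (mk s * C (s 0)⁻¹) *
      Kmat q (katetov1 q s) n * upperToeplitz q n (C (s 0)⁻¹ * mk s) := by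
  have hK : Kmat q (katetov1 q s) n = blockMatrix q n fun a b => katetov1 q s (a + (b + 1)) :=
    rfl
  rw [hankelSchurComplement_eq_blockMatrix, hK, lowerToeplitz_mul_blockMatrix,
    blockMatrix_mul_upperToeplitz]
  refine blockMatrix_congr fun j _ k _ => ?_
  set ρ := mk (fun c => s (j + 1 + c)) * mk (reciprocal q s) * C (s 0)
  have hrow : (mk fun b => coeff j (mk s * C (s 0)⁻¹ * mk fun a => katetov1 q s (a + (b + 1)))) =
      mk fun b => coeff (b + 1) ρ :=
    ext fun b => by rw [coeff_mk, coeff_mk, coeff_mul_mk_katetov1 h0]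
  have hρ : constantCoeff ρ = s (j + 1) := by
    simp [ρ, reciprocal_zero, nonsing_inv_mul_cancel_right _ _ h0]
  rw [hrow, coeff_mk_coeff_succ_mul, mul_mk_reciprocal_mul_C_cancel h0, hρ, coeff_mk,
    coeff_C_mul, coeff_mk, mul_assoc]
  ring_nf

theorem Matrix.IsSchurComplement.lowerToeplitz_mul_mul_upperToeplitz {n : ℕ}
    {B : Matrix (Fin (n + 1) × Fin q) (Fin (n + 1) × Fin q) ℂ} {g : Mq q}
    (h : IsSchurComplement B (lastBlock q n) g) :
    IsSchurComplement (lowerToeplitz q n (mk s * C (s 0)⁻¹) * B *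
      upperToeplitz q n (C (s 0)⁻¹ * mk s)) (lastBlock q n) g := by
  refine h.mul_mul (lowerToeplitz_mul_lastBlock ?_) (conjTranspose_lastBlock_mul_upperToeplitz ?_)
    (isUnit_det_of_right_inverse (B := upperToeplitz q n (mk (reciprocal q s) * C (s 0))) ?_)
  · simp [mul_nonsing_inv _ h0]
  · simp [nonsing_inv_mul _ h0]
  · rw [upperToeplitz_mul_upperToeplitz, mul_assoc, ← mul_assoc (mk s), mk_mul_mk_reciprocal h0,
      one_mul, C_nonsing_inv_mul_C h0, upperToeplitz_one]

theorem isUnit_det_Hmat_katetov1 {n : ℕ} (hK : IsUnit (Kmat q s n).det) :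
    IsUnit (Hmat q (katetov1 q s) n).det := by
  rw [Kmat_eq_mul_Hmat_katetov1_mul h0, det_mul, det_mul] at hK
  exact (IsUnit.mul_iff.1 (IsUnit.mul_iff.1 hK).1).2

theorem isUnit_det_Kmat_katetov1 {n : ℕ} (hH : IsUnit (Hmat q s (n + 1)).det) :
    IsUnit (Kmat q (katetov1 q s) n).det := by
  have h := isUnit_det_hankelSchurComplement h0 hH
  rw [hankelSchurComplement_eq_mul_Kmat_katetov1_mul h0, det_mul, det_mul] at h
  exact (IsUnit.mul_iff.1 (IsUnit.mul_iff.1 h).1).2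

end Katetov

theorem IsStieltjesPD.isUnit_det_zero {q : ℕ} {s : ℕ → Mq q} (hs : IsStieltjesPD q s) :
    IsUnit (s 0).det := by
  rw [← Hmat_zero_submatrix s, det_submatrix_equiv_self]
  exact (isUnit_iff_isUnit_det _).1 (hs 0).1.isUnit

theorem stmt1_general (q : ℕ) (s : ℕ → Mq q) (hs : IsStieltjesPD q s) (k : ℕ) :
    qEven q (katetov q 1 s) k = qOdd q s k ∧
      qOdd q (katetov q 1 s) k = qEven q s (k + 1) := by
  have hH (n : ℕ) : IsUnit (Hmat q s n).det := (isUnit_iff_isUnit_det _).1 (hs n).1.isUnit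
  have hK (n : ℕ) : IsUnit (Kmat q s n).det := (isUnit_iff_isUnit_det _).1 (hs n).2.isUnit
  have h0 := hs.isUnit_det_zero
  rw [katetov, Function.iterate_one]
  constructor
  · have h := (isSchurComplement_qEven _ k fun n _ =>
      isUnit_det_Hmat_katetov1 h0 (hK n)).lowerToeplitz_mul_mul_upperToeplitz h0
    rw [← Kmat_eq_mul_Hmat_katetov1_mul h0] at h
    exact h.unique (hs k).2.isHermitian (isSchurComplement_qOdd s k fun n _ => hK n)
  · have h := (isSchurComplement_qOdd _ k fun n _ =>
      isUnit_det_Kmat_katetov1 h0 (hH (n + 1))).lowerToeplitz_mul_mul_upperToeplitz h0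
    rw [← hankelSchurComplement_eq_mul_Kmat_katetov1_mul h0] at h
    exact (h.Hmat_succ h0).unique (hs (k + 1)).1.isHermitian
      (isSchurComplement_qEven s (k + 1) fun n _ => hH n)

/-- `L_k^{(1)} = Λ_k` and `Λ_k^{(1)} = L_{k+1}`. -/
theorem stmt1 (q : ℕ) (hq : 1 ≤ q) (s : ℕ → Mq q) (hs : IsStieltjesPD q s) (k : ℕ) :
    qEven q (katetov q 1 s) k = qOdd q s k ∧
      qOdd q (katetov q 1 s) k = qEven q s (k + 1) :=
  stmt1_general q s hs k

end
end

section
/- Let q ≥ 1 be an integer and let (s_j)_{j=0}^∞ be a Stieltjes positive definite sequence of complex q×q matrices with Dyukarev–Stieltjes parameters [(𝔏_k)_{k=0}^∞, (𝔐_k)_{k=0}^∞]. Then the Dyukarev–Stieltjes parameters [(𝔏_k^{(1)})_{k=0}^∞, (𝔐_k^{(1)})_{k=0}^∞] of the first Kátětov transform (s_j^{(1)})_{j=0}^∞ are given by 𝔏_k^{(1)} = s_0 · 𝔐_{k+1} · s_0 and 𝔐_k^{(1)} = s_0^{−1} · 𝔏_k · s_0^{−1} for all k ∈ ℕ₀.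 -/
open Matrix
open scoped ComplexOrder

noncomputable section

/-!
The generating series of the reciprocal sequence `s^♯` is the two-sided inverse of that of `s`,
and, `s` being Hermitian, so is `s^♯`. Let `W_n` be the lower block Toeplitz matrix
`(s_0 s^♯_{i-j})_{i,j=0}^n`; its inverse is the Toeplitz matrix `V_n` of `(s_j s_0⁻¹)_j`.
Computing entries with `s^♯ s = s s^♯ = 1` gives the congruences
  `W_n K_n W_n^* = H_n^{(1)}`  and  `W_{n+1} H_{n+1} W_{n+1}^* = diag(s_0, K_n^{(1)})`.
Since `V_n v_n = y_{0,n} s_0⁻¹` and `W_{n+1} v_{n+1} = col(I, -y^{(1)}_{0,n} s_0⁻¹)`, these yield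
  `v_n^* (H_n^{(1)})⁻¹ v_n = s_0⁻¹ y_{0,n}^* K_n⁻¹ y_{0,n} s_0⁻¹`  and
  `s_0 v_{n+1}^* H_{n+1}⁻¹ v_{n+1} s_0 = s_0 + y^{(1)*}_{0,n} (K_n^{(1)})⁻¹ y^{(1)}_{0,n}`,
and `𝔐_k`, `𝔏_k` are the increments in `k` of these quadratic forms.
-/

namespace Katetov

open Finset PowerSeries Matrix

theorem sum_range_ite_le {M : Type*} [AddCommMonoid M] {m N : ℕ} (h : m < N) (f : ℕ → M) :
    ∑ j ∈ range N, (if j ≤ m then f j else 0) = ∑ j ∈ range (m + 1), f j := by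
  rw [← sum_filter]
  congr 1
  ext j
  simp only [mem_filter, mem_range]
  omega

theorem sum_fin_ite_le {M : Type*} [AddCommMonoid M] {n : ℕ} (i : Fin (n + 1)) (f : ℕ → M) :
    ∑ j : Fin (n + 1), (if (j : ℕ) ≤ i then f j else 0) = ∑ j ∈ range (i + 1), f j := by
  rw [Fin.sum_univ_eq_sum_range (fun j => if j ≤ (i : ℕ) then f j else 0), sum_range_ite_le i.2]

section Ring

variable {A : Type*} [Ring A]

theorem sum_range_mul_coeff_eq_coeff_mul (F G : A⟦X⟧) (k : ℕ) :
    ∑ b ∈ range (k + 1), coeff b F * coeff (k - b) G = coeff k (F * G) := by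
  rw [coeff_mul, Nat.sum_antidiagonal_eq_sum_range_succ (fun i j => coeff i F * coeff j G)]

/-- `coeff (m + b) (R * S)`, split into the terms with `coeff l R` for `l ≤ m` and for `l > m`. -/
theorem sum_coeff_mul_coeff_add_add (R S : A⟦X⟧) (m b : ℕ) :
    ∑ a ∈ range (m + 1), coeff (m - a) R * coeff (a + b) S +
        coeff b (X * (PowerSeries.mk (fun c => coeff (m + 1 + c) R) * S)) =
      coeff (m + b) (R * S) := by
  rw [coeff_mul (m + b), Nat.sum_antidiagonal_eq_sum_range_succ (fun i j => coeff i R * coeff j S),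
    Nat.succ_eq_add_one, show m + b + 1 = (m + 1) + b by omega,
    sum_range_add (fun l => coeff l R * coeff (m + b - l) S) (m + 1) b,
    ← sum_range_reflect (fun l => coeff l R * coeff (m + b - l) S) (m + 1)]
  congr 1
  · refine sum_congr rfl fun a ha => ?_
    have := mem_range.mp ha
    rw [show m + 1 - 1 - a = m - a by omega, show m + b - (m - a) = a + b by omega]
  · cases b with
    | zero => simp
    | succ b =>
      rw [coeff_succ_X_mul, coeff_mul,
        Nat.sum_antidiagonal_eq_sum_range_succ (fun i j => coeff i _ * coeff j S)]
      refine sum_congr rfl fun c hc => ?_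
      rw [coeff_mk, show m + (b + 1) - (m + 1 + c) = b - c by omega]

variable {R S : A⟦X⟧}

/-- For `R = S⁻¹`, the Hankel matrix `(coeff (a + b) S)` sandwiched between Toeplitz matrices of
`R` is `diag(coeff 0 R, -(coeff (i + k + 2) R)_{i,k})`. -/
theorem sum_sum_coeff_hankel (hRS : R * S = 1) (hSR : S * R = 1) (m k : ℕ) :
    ∑ a ∈ range (m + 1), ∑ b ∈ range (k + 1), coeff (m - a) R * coeff (a + b) S * coeff (k - b) R =
      (if m = 0 then coeff k R else 0) - (if k = 0 then 0 else coeff (m + k) R) := by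
  set R' := PowerSeries.mk fun c => coeff (m + 1 + c) R
  have hrow : ∀ b, ∑ a ∈ range (m + 1), coeff (m - a) R * coeff (a + b) S =
      (if m + b = 0 then 1 else 0) - coeff b (X * (R' * S)) := by
    intro b
    rw [← coeff_one, ← hRS, ← sum_coeff_mul_coeff_add_add, add_sub_cancel_right]
  rw [sum_comm]
  calc _ = ∑ b ∈ range (k + 1), ((if m + b = 0 then 1 else 0) * coeff (k - b) R -
        coeff b (X * (R' * S)) * coeff (k - b) R) :=
      sum_congr rfl fun b _ => by rw [← sub_mul, ← hrow, sum_mul]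
    _ = _ := by
      rw [sum_sub_distrib, sum_range_mul_coeff_eq_coeff_mul, mul_assoc, mul_assoc, hSR, mul_one,
        sum_range_succ']
      congr 1
      · simp
      · cases k with
        | zero => simp
        | succ k => rw [coeff_succ_X_mul, coeff_mk, if_neg (by omega), add_assoc, add_comm 1 k]

theorem sum_sum_coeff_hankel_succ (hRS : R * S = 1) (hSR : S * R = 1) (m k : ℕ) :
    ∑ a ∈ range (m + 1), ∑ b ∈ range (k + 1),
        coeff (m - a) R * coeff (a + b + 1) S * coeff (k - b) R = -coeff (m + k + 1) R := by
  set R' := PowerSeries.mk fun c => coeff (m + 1 + c) R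
  have hrow : ∀ b, ∑ a ∈ range (m + 1), coeff (m - a) R * coeff (a + b + 1) S =
      -coeff b (R' * S) := by
    intro b
    have := sum_coeff_mul_coeff_add_add R S m (b + 1)
    rw [hRS, coeff_one, if_neg (by omega), coeff_succ_X_mul] at this
    exact eq_neg_of_add_eq_zero_left this
  rw [sum_comm]
  calc _ = ∑ b ∈ range (k + 1), -coeff b (R' * S) * coeff (k - b) R :=
      sum_congr rfl fun b _ => by rw [← hrow, sum_mul]
    _ = _ := by
      simp_rw [neg_mul]
      rw [sum_neg_distrib, sum_range_mul_coeff_eq_coeff_mul, mul_assoc, hSR, mul_one, coeff_mk,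
        add_right_comm]

def lowerToeplitz (n : ℕ) (F : A⟦X⟧) : Matrix (Fin (n + 1)) (Fin (n + 1)) A :=
  of fun i j => if j ≤ i then coeff (i - j : ℕ) F else 0

def hankel (n : ℕ) (f : ℕ → A) : Matrix (Fin (n + 1)) (Fin (n + 1)) A :=
  of fun i j => f (i + j)

theorem lowerToeplitz_one (n : ℕ) : lowerToeplitz n (1 : A⟦X⟧) = 1 := by
  ext i j
  simp only [lowerToeplitz, of_apply, coeff_one, one_apply, Fin.ext_iff, Fin.le_iff_val_le_val]
  split_ifs <;> first | rfl | (exfalso; omega)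

theorem lowerToeplitz_mul (n : ℕ) (F G : A⟦X⟧) :
    lowerToeplitz n (F * G) = lowerToeplitz n F * lowerToeplitz n G := by
  ext i k
  simp only [lowerToeplitz, mul_apply, of_apply, ite_mul, zero_mul, Fin.le_iff_val_le_val]
  rw [sum_fin_ite_le i (fun j => coeff (i - j) F * if (k : ℕ) ≤ j then coeff (j - k) G else 0)]
  split_ifs with hki
  · rw [← sum_range_reflect, ← sum_range_mul_coeff_eq_coeff_mul,
      ← sum_range_ite_le (show (i : ℕ) - k < i + 1 by omega)]
    refine sum_congr rfl fun j hj => ?_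
    have := mem_range.mp hj
    rw [show (i : ℕ) + 1 - 1 - j = i - j by omega, show (i : ℕ) - (i - j) = j by omega]
    by_cases hj' : j ≤ i - k
    · rw [if_pos hj', if_pos (by omega), show (i : ℕ) - j - k = i - k - j by omega]
    · rw [if_neg hj', if_neg (by omega), mul_zero]
  · refine (sum_eq_zero fun j hj => ?_).symm
    rw [if_neg (by have := mem_range.mp hj; omega), mul_zero]

theorem lowerToeplitz_mulVec_single_zero (n : ℕ) (F : A⟦X⟧) :
    lowerToeplitz n F *ᵥ Pi.single 0 1 = fun i : Fin (n + 1) => coeff (i : ℕ) F := by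
  ext i
  simp [lowerToeplitz]

theorem lowerToeplitz_mul_hankel_mul_conjTranspose_apply [StarRing A] (n : ℕ) (F G : A⟦X⟧)
    (f : ℕ → A) (i k : Fin (n + 1)) :
    (lowerToeplitz n F * hankel n f * (lowerToeplitz n G)ᴴ) i k =
      ∑ a ∈ range (i + 1), ∑ b ∈ range (k + 1),
        coeff (i - a) F * f (a + b) * star (coeff (k - b) G) := by
  simp only [lowerToeplitz, hankel, mul_apply, conjTranspose_apply, of_apply, ite_mul, zero_mul,
    apply_ite star, star_zero, mul_ite, mul_zero, Fin.le_iff_val_le_val]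
  have hrow : ∀ b : ℕ, (∑ j : Fin (n + 1),
      if (j : ℕ) ≤ i then coeff ((i : ℕ) - j) F * f (j + b) else 0) =
        ∑ a ∈ range (i + 1), coeff (i - a) F * f (a + b) :=
    fun b => sum_fin_ite_le i (fun a => coeff (i - a) F * f (a + b))
  rw [sum_fin_ite_le k (fun b => (∑ j : Fin (n + 1),
    if (j : ℕ) ≤ i then coeff ((i : ℕ) - j) F * f (j + b) else 0) * star (coeff (k - b) G))]
  simp only [hrow, sum_mul]
  exact sum_comm

end Ring

theorem comp_mul {I J R : Type*} [Fintype I] [Fintype J] [NonUnitalNonAssocSemiring R]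
    (M N : Matrix I I (Matrix J J R)) :
    comp I I J J R (M * N) = comp I I J J R M * comp I I J J R N :=
  map_mul (compRingEquiv I J R) M N

theorem conjTranspose_comp {I J K R : Type*} [Star R] (M : Matrix I J (Matrix K K R)) :
    (comp I J K K R M)ᴴ = comp J I K K R Mᴴ := rfl

theorem inv_mul_mul_conjTranspose_of_mul_eq_one {m α : Type*} [Fintype m] [DecidableEq m]
    [CommRing α] [StarRing α] {V W : Matrix m m α} (X : Matrix m m α) (h : V * W = 1) :
    (W * X * Wᴴ)⁻¹ = Vᴴ * X⁻¹ * V := by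
  rw [Matrix.mul_inv_rev, Matrix.mul_inv_rev, ← conjTranspose_nonsing_inv,
    inv_eq_left_inv h, Matrix.mul_assoc]

theorem conjTranspose_mul_conj_mul {l m p α : Type*} [Fintype l] [Fintype m] [CommRing α]
    [StarRing α] (v : Matrix m p α) (W : Matrix l m α) (X : Matrix l l α) :
    vᴴ * (Wᴴ * X * W) * v = (W * v)ᴴ * X * (W * v) := by
  simp only [conjTranspose_mul, Matrix.mul_assoc]

variable {q : ℕ} {s : ℕ → Mq q} {n : ℕ}

section Reciprocal

theorem reciprocal_succ (s : ℕ → Mq q) (j : ℕ) :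
    reciprocal q s (j + 1) =
      -(s 0)⁻¹ * ∑ l ∈ range (j + 1), s (j + 1 - l) * reciprocal q s l := by
  rw [reciprocal, sum_attach (range (j + 1)) (fun l => s (j + 1 - l) * reciprocal q s l)]

theorem mk_mul_mk_reciprocal (hs0 : IsUnit (s 0).det) :
    PowerSeries.mk s * PowerSeries.mk (reciprocal q s) = 1 := by
  refine PowerSeries.ext fun n => ?_
  rw [coeff_mul, ← Nat.sum_antidiagonal_swap, coeff_one]
  simp only [Prod.fst_swap, Prod.snd_swap, coeff_mk]
  rw [Nat.sum_antidiagonal_eq_sum_range_succ (fun i j => s j * reciprocal q s i)]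
  cases n with
  | zero => simp [reciprocal, mul_nonsing_inv _ hs0]
  | succ n =>
    rw [sum_range_succ, Nat.sub_self, reciprocal_succ, neg_mul, mul_neg,
      mul_nonsing_inv_cancel_left _ _ hs0, add_neg_cancel, if_neg n.succ_ne_zero]

theorem mk_reciprocal_mul_mk (hs0 : IsUnit (s 0).det) :
    PowerSeries.mk (reciprocal q s) * PowerSeries.mk s = 1 := by
  have hu : IsUnit (s 0) := (isUnit_iff_isUnit_det _).mpr hs0
  have hleft := invOfUnit_mul (PowerSeries.mk s) hu.unit (by simp)
  rwa [left_inv_eq_right_inv hleft (mk_mul_mk_reciprocal hs0)] at hleft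

/-- The conjugate transpose of `s^♯` is a left inverse of `s`, hence equal to `s^♯`. -/
theorem conjTranspose_reciprocal (hherm : ∀ j, (s j)ᴴ = s j) (hs0 : IsUnit (s 0).det) (j : ℕ) :
    (reciprocal q s j)ᴴ = reciprocal q s j := by
  have hleft : PowerSeries.mk (fun j => (reciprocal q s j)ᴴ) * PowerSeries.mk s = 1 := by
    refine PowerSeries.ext fun n => ?_
    have h := congrArg (fun F => (coeff n F)ᴴ) (mk_mul_mk_reciprocal hs0)
    simp only [coeff_mul, coeff_one, coeff_mk, conjTranspose_sum, conjTranspose_mul, hherm] at h ⊢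
    rw [← Nat.sum_antidiagonal_swap]
    simp only [Prod.fst_swap, Prod.snd_swap]
    rw [h]
    split_ifs <;> simp
  simpa using congrArg (coeff j) (left_inv_eq_right_inv hleft (mk_mul_mk_reciprocal hs0))

theorem conjTranspose_katetov1 (hherm : ∀ j, (s j)ᴴ = s j) (hs0 : IsUnit (s 0).det) (j : ℕ) :
    (katetov1 q s j)ᴴ = katetov1 q s j := by
  simp [katetov1, conjTranspose_reciprocal hherm hs0, hherm, Matrix.mul_assoc]

end Reciprocal

section Blocks

theorem Hmat_eq_comp (s : ℕ → Mq q) (n : ℕ) : Hmat q s n = comp _ _ _ _ ℂ (hankel n s) := rfl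

theorem Kmat_eq_comp (s : ℕ → Mq q) (n : ℕ) :
    Kmat q s n = comp _ _ _ _ ℂ (hankel n fun j => s (j + 1)) := rfl

def blockCol (c : Fin (n + 1) → Mq q) : Matrix (Fin (n + 1) × Fin q) (Fin q) ℂ :=
  of fun p b => c p.1 p.2 b

theorem comp_mul_blockCol (M : Matrix (Fin (n + 1)) (Fin (n + 1)) (Mq q))
    (c : Fin (n + 1) → Mq q) : comp _ _ _ _ ℂ M * blockCol c = blockCol (M *ᵥ c) := by
  ext ⟨i, a⟩ b
  simp [blockCol, mul_apply, mulVec, dotProduct, Fintype.sum_prod_type, Matrix.sum_apply]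

theorem blockCol_mul (c : Fin (n + 1) → Mq q) (B : Mq q) :
    blockCol c * B = blockCol fun i => c i * B := by
  ext
  simp [blockCol, mul_apply]

theorem vcol_eq_blockCol : vcol q n = blockCol (Pi.single 0 1) := by
  ext ⟨i, a⟩ b
  rcases Fin.eq_zero_or_eq_succ i with rfl | ⟨j, rfl⟩
  · simp [vcol, blockCol, one_apply]
  · simp [vcol, blockCol]

theorem comp_hankel_zero (f : ℕ → Mq q) :
    comp _ _ _ _ ℂ (hankel 0 f : Matrix (Fin 1) (Fin 1) (Mq q)) =
      (f 0).submatrix (Equiv.uniqueProd (Fin q) (Fin 1)) (Equiv.uniqueProd (Fin q) (Fin 1)) := by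
  ext ⟨i, a⟩ ⟨k, b⟩
  simp [hankel, Fin.fin_one_eq_zero i, Fin.fin_one_eq_zero k]

theorem blockCol_zero (c : Fin 1 → Mq q) :
    blockCol c = (c 0).submatrix (Equiv.uniqueProd (Fin q) (Fin 1)) id := by
  ext ⟨i, a⟩ b
  simp [blockCol, Fin.fin_one_eq_zero i]

def splitFirstBlock (q n : ℕ) : Fin (n + 2) × Fin q ≃ Fin q ⊕ Fin (n + 1) × Fin q :=
  ((finSuccEquiv (n + 1)).prodCongr (Equiv.refl _)).trans optionProdEquiv

@[simp]
theorem splitFirstBlock_zero (a : Fin q) : splitFirstBlock q n (0, a) = Sum.inl a := by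
  simp [splitFirstBlock]

@[simp]
theorem splitFirstBlock_succ (i : Fin (n + 1)) (a : Fin q) :
    splitFirstBlock q n (i.succ, a) = Sum.inr (i, a) := by
  simp [splitFirstBlock]

theorem blockCol_eq_submatrix_fromRows (c : Fin (n + 2) → Mq q) :
    blockCol c =
      (fromRows (c 0) (blockCol fun i => c i.succ)).submatrix (splitFirstBlock q n) id := by
  ext ⟨i, a⟩ b
  rcases Fin.eq_zero_or_eq_succ i with rfl | ⟨i, rfl⟩ <;> simp [blockCol]

end Blocks

section Toeplitz

variable (s n) in
def recipToeplitz : Matrix (Fin (n + 1)) (Fin (n + 1)) (Mq q) :=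
  lowerToeplitz n (C (s 0) * PowerSeries.mk (reciprocal q s))

variable (s n) in
def seqToeplitz : Matrix (Fin (n + 1)) (Fin (n + 1)) (Mq q) :=
  lowerToeplitz n (PowerSeries.mk s * C (s 0)⁻¹)

theorem seqToeplitz_mul_recipToeplitz (hs0 : IsUnit (s 0).det) :
    seqToeplitz s n * recipToeplitz s n = 1 := by
  rw [seqToeplitz, recipToeplitz, ← lowerToeplitz_mul, mul_assoc, ← mul_assoc (C _), ← map_mul,
    nonsing_inv_mul _ hs0, map_one, one_mul, mk_mul_mk_reciprocal hs0, lowerToeplitz_one]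

theorem recipToeplitz_sandwich_apply (hherm : ∀ j, (s j)ᴴ = s j) (hs0 : IsUnit (s 0).det)
    (f : ℕ → Mq q) (i k : Fin (n + 1)) :
    (recipToeplitz s n * hankel n f * (recipToeplitz s n)ᴴ) i k =
      s 0 * (∑ a ∈ range (i + 1), ∑ b ∈ range (k + 1),
        reciprocal q s (i - a) * f (a + b) * reciprocal q s (k - b)) * s 0 := by
  rw [recipToeplitz, lowerToeplitz_mul_hankel_mul_conjTranspose_apply, mul_sum, sum_mul]
  refine sum_congr rfl fun a _ => ?_
  rw [mul_sum, sum_mul]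
  refine sum_congr rfl fun b _ => ?_
  simp only [coeff_C_mul, coeff_mk, star_mul, star_eq_conjTranspose, hherm,
    conjTranspose_reciprocal hherm hs0, mul_assoc]

theorem recipToeplitz_mul_hankel_succ (hherm : ∀ j, (s j)ᴴ = s j) (hs0 : IsUnit (s 0).det) :
    recipToeplitz s n * hankel n (fun j => s (j + 1)) * (recipToeplitz s n)ᴴ =
      hankel n (katetov1 q s) := by
  ext1 i k
  have h := sum_sum_coeff_hankel_succ (mk_reciprocal_mul_mk hs0) (mk_mul_mk_reciprocal hs0) i k
  simp only [coeff_mk] at h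
  rw [recipToeplitz_sandwich_apply hherm hs0, h, hankel, of_apply, katetov1]
  simp only [mul_neg, neg_mul]

theorem recipToeplitz_mul_hankel_apply (hherm : ∀ j, (s j)ᴴ = s j) (hs0 : IsUnit (s 0).det)
    (i k : Fin (n + 1)) :
    (recipToeplitz s n * hankel n s * (recipToeplitz s n)ᴴ) i k =
      s 0 * ((if (i : ℕ) = 0 then reciprocal q s k else 0) -
        (if (k : ℕ) = 0 then 0 else reciprocal q s (i + k))) * s 0 := by
  have h := sum_sum_coeff_hankel (mk_reciprocal_mul_mk hs0) (mk_mul_mk_reciprocal hs0) i k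
  simp only [coeff_mk] at h
  rw [recipToeplitz_sandwich_apply hherm hs0, h]

theorem recipToeplitz_mul_Hmat_succ (hherm : ∀ j, (s j)ᴴ = s j) (hs0 : IsUnit (s 0).det) :
    comp _ _ _ _ ℂ (recipToeplitz s (n + 1)) * Hmat q s (n + 1) *
        (comp _ _ _ _ ℂ (recipToeplitz s (n + 1)))ᴴ =
      (fromBlocks (s 0) 0 0 (Kmat q (katetov1 q s) n)).submatrix
        (splitFirstBlock q n) (splitFirstBlock q n) := by
  rw [Hmat_eq_comp, conjTranspose_comp, ← comp_mul, ← comp_mul]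
  ext ⟨i, a⟩ ⟨k, b⟩
  rw [comp_apply, recipToeplitz_mul_hankel_apply hherm hs0]
  rcases Fin.eq_zero_or_eq_succ i with rfl | ⟨i, rfl⟩ <;>
    rcases Fin.eq_zero_or_eq_succ k with rfl | ⟨k, rfl⟩
  · simp [reciprocal, nonsing_inv_mul_cancel_right _ _ hs0]
  · simp
  · simp
  · simp [Kmat, katetov1, add_right_comm, add_assoc]

theorem comp_seqToeplitz_mul_comp_recipToeplitz (hs0 : IsUnit (s 0).det) :
    comp _ _ _ _ ℂ (seqToeplitz s n) * comp _ _ _ _ ℂ (recipToeplitz s n) = 1 := by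
  rw [← comp_mul, seqToeplitz_mul_recipToeplitz hs0, comp_one]

theorem comp_seqToeplitz_mul_vcol :
    comp _ _ _ _ ℂ (seqToeplitz s n) * vcol q n = ycol q s n * (s 0)⁻¹ := by
  rw [vcol_eq_blockCol, comp_mul_blockCol, seqToeplitz, lowerToeplitz_mulVec_single_zero,
    show ycol q s n = blockCol fun i => s i from rfl, blockCol_mul]
  simp only [coeff_mul_C, coeff_mk]

theorem comp_recipToeplitz_mul_vcol (hs0 : IsUnit (s 0).det) :
    comp _ _ _ _ ℂ (recipToeplitz s (n + 1)) * vcol q (n + 1) =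
      (fromRows 1 (-(ycol q (katetov1 q s) n * (s 0)⁻¹))).submatrix (splitFirstBlock q n) id := by
  rw [vcol_eq_blockCol, comp_mul_blockCol, recipToeplitz, lowerToeplitz_mulVec_single_zero,
    blockCol_eq_submatrix_fromRows]
  congr 2
  · simp [reciprocal, mul_nonsing_inv _ hs0]
  · rw [show ycol q (katetov1 q s) n = blockCol fun i => katetov1 q s i from rfl, blockCol_mul]
    ext ⟨i, a⟩ b
    simp [blockCol, katetov1, mul_nonsing_inv_cancel_right _ _ hs0]

end Toeplitz

def quadH (q : ℕ) (s : ℕ → Mq q) (n : ℕ) : Mq q :=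
  (vcol q n)ᴴ * (Hmat q s n)⁻¹ * vcol q n

def quadK (q : ℕ) (s : ℕ → Mq q) (n : ℕ) : Mq q :=
  (ycol q s n)ᴴ * (Kmat q s n)⁻¹ * ycol q s n

theorem quadH_zero (s : ℕ → Mq q) : quadH q s 0 = DSM q s 0 := by
  rw [quadH, vcol_eq_blockCol, blockCol_zero, Hmat_eq_comp, comp_hankel_zero,
    conjTranspose_submatrix, inv_submatrix_equiv, submatrix_mul_equiv, submatrix_mul_equiv,
    submatrix_id_id]
  simp [DSM]

theorem quadK_zero (h0 : (s 0)ᴴ = s 0) : quadK q s 0 = DSL q s 0 := by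
  rw [quadK, show ycol q s 0 = blockCol fun i => s i from rfl, blockCol_zero, Kmat_eq_comp,
    comp_hankel_zero, conjTranspose_submatrix, inv_submatrix_equiv, submatrix_mul_equiv,
    submatrix_mul_equiv, submatrix_id_id, Fin.val_zero, h0, DSL]

theorem DSM_succ (k : ℕ) : DSM q s (k + 1) = quadH q s (k + 1) - quadH q s k := rfl

theorem DSL_succ (k : ℕ) : DSL q s (k + 1) = quadK q s (k + 1) - quadK q s k := rfl

theorem quadH_katetov1 (hherm : ∀ j, (s j)ᴴ = s j) (hs0 : IsUnit (s 0).det) (n : ℕ) :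
    quadH q (katetov1 q s) n = (s 0)⁻¹ * quadK q s n * (s 0)⁻¹ := by
  rw [quadH, Hmat_eq_comp, ← recipToeplitz_mul_hankel_succ hherm hs0, comp_mul, comp_mul,
    ← conjTranspose_comp, ← Kmat_eq_comp,
    inv_mul_mul_conjTranspose_of_mul_eq_one _ (comp_seqToeplitz_mul_comp_recipToeplitz hs0),
    conjTranspose_mul_conj_mul, comp_seqToeplitz_mul_vcol, conjTranspose_mul,
    conjTranspose_nonsing_inv, hherm, quadK]
  simp only [Matrix.mul_assoc]

theorem quadK_katetov1 (hherm : ∀ j, (s j)ᴴ = s j) (hs0 : IsUnit (s 0).det)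
    (hH : IsUnit (Hmat q s (n + 1)).det) :
    quadK q (katetov1 q s) n = s 0 * quadH q s (n + 1) * s 0 - s 0 := by
  set W := comp _ _ _ _ ℂ (recipToeplitz s (n + 1))
  set V := comp _ _ _ _ ℂ (seqToeplitz s (n + 1))
  set e := splitFirstBlock q n
  set K := Kmat q (katetov1 q s) n
  have hVW : V * W = 1 := comp_seqToeplitz_mul_comp_recipToeplitz hs0
  have hM : W * Hmat q s (n + 1) * Wᴴ = (fromBlocks (s 0) 0 0 K).submatrix e e :=
    recipToeplitz_mul_Hmat_succ hherm hs0
  have hK : IsUnit K := by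
    have hW : IsUnit W := (isUnit_iff_isUnit_det W).mpr (isUnit_det_of_left_inverse hVW)
    have hMunit := (hW.mul ((isUnit_iff_isUnit_det _).mpr hH)).mul hW.star
    rw [star_eq_conjTranspose, hM, isUnit_submatrix_equiv, isUnit_fromBlocks_zero₂₁] at hMunit
    exact hMunit.2
  have hHmat : Hmat q s (n + 1) = V * (fromBlocks (s 0) 0 0 K).submatrix e e * Vᴴ := by
    calc Hmat q s (n + 1) = (V * W) * Hmat q s (n + 1) * (V * W)ᴴ := by
          rw [hVW, conjTranspose_one, Matrix.one_mul, Matrix.mul_one]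
      _ = V * (W * Hmat q s (n + 1) * Wᴴ) * Vᴴ := by
          simp only [conjTranspose_mul, Matrix.mul_assoc]
      _ = _ := by rw [hM]
  have hquadH : quadH q s (n + 1) = (s 0)⁻¹ + (s 0)⁻¹ * quadK q (katetov1 q s) n * (s 0)⁻¹ := by
    rw [quadH, hHmat, inv_mul_mul_conjTranspose_of_mul_eq_one _ (mul_eq_one_comm.mp hVW),
      inv_submatrix_equiv, inv_fromBlocks_zero₂₁_of_isUnit_iff _ _ _
        (iff_of_true ((isUnit_iff_isUnit_det _).mpr hs0) hK),
      conjTranspose_mul_conj_mul, comp_recipToeplitz_mul_vcol hs0, conjTranspose_submatrix,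
      submatrix_mul_equiv, submatrix_mul_equiv, submatrix_id_id,
      conjTranspose_fromRows_eq_fromCols_conjTranspose, fromCols_mul_fromBlocks,
      fromCols_mul_fromRows]
    simp [quadK, K, conjTranspose_nonsing_inv, hherm, Matrix.mul_assoc]
  rw [hquadH, Matrix.mul_add, Matrix.add_mul, mul_nonsing_inv _ hs0, Matrix.one_mul,
    add_sub_cancel_left, ← Matrix.mul_assoc, ← Matrix.mul_assoc, mul_nonsing_inv _ hs0,
    Matrix.one_mul, nonsing_inv_mul_cancel_right _ _ hs0]

end Katetov

namespace IsStieltjesPD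

open Matrix

variable {q : ℕ} {s : ℕ → Mq q}

theorem conjTranspose (hs : IsStieltjesPD q s) (j : ℕ) : (s j)ᴴ = s j := by
  ext a b
  simpa [Hmat] using congrFun (congrFun (hs j).1.isHermitian.eq ((0 : Fin (j + 1)), a))
    (Fin.last j, b)

theorem isUnit_det_Hmat (hs : IsStieltjesPD q s) (n : ℕ) : IsUnit (Hmat q s n).det :=
  (hs n).1.det_pos.ne'.isUnit

theorem isUnit_det_zero_s5 (hs : IsStieltjesPD q s) : IsUnit (s 0).det := by
  have h := hs.isUnit_det_Hmat 0
  rwa [Katetov.Hmat_eq_comp, Katetov.comp_hankel_zero, det_submatrix_equiv_self] at h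

end IsStieltjesPD

theorem stmt5_general (q : ℕ) (s : ℕ → Mq q) (hs : IsStieltjesPD q s) (k : ℕ) :
    DSL q (katetov q 1 s) k = s 0 * DSM q s (k + 1) * s 0 ∧
      DSM q (katetov q 1 s) k = (s 0)⁻¹ * DSL q s k * (s 0)⁻¹ := by
  have hherm := hs.conjTranspose
  have hs0 := hs.isUnit_det_zero_s5
  rw [katetov, Function.iterate_one]
  constructor
  · cases k with
    | zero =>
      rw [← Katetov.quadK_zero (Katetov.conjTranspose_katetov1 hherm hs0 0),
        Katetov.quadK_katetov1 hherm hs0 (hs.isUnit_det_Hmat 1), Katetov.DSM_succ,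
        Katetov.quadH_zero, DSM, Matrix.mul_sub, Matrix.sub_mul,
        Matrix.nonsing_inv_mul_cancel_right _ _ hs0]
    | succ k =>
      rw [Katetov.DSL_succ, Katetov.quadK_katetov1 hherm hs0 (hs.isUnit_det_Hmat _),
        Katetov.quadK_katetov1 hherm hs0 (hs.isUnit_det_Hmat _), Katetov.DSM_succ,
        Matrix.mul_sub, Matrix.sub_mul]
      abel
  · cases k with
    | zero =>
      rw [← Katetov.quadH_zero, Katetov.quadH_katetov1 hherm hs0, Katetov.quadK_zero (hherm 0)]
    | succ k =>
      rw [Katetov.DSM_succ, Katetov.quadH_katetov1 hherm hs0, Katetov.quadH_katetov1 hherm hs0,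
        Katetov.DSL_succ, Matrix.mul_sub, Matrix.sub_mul]

/-- `𝔏_k^{(1)} = s_0 𝔐_{k+1} s_0` and `𝔐_k^{(1)} = s_0⁻¹ 𝔏_k s_0⁻¹`. -/
theorem stmt5 (q : ℕ) (hq : 1 ≤ q) (s : ℕ → Mq q) (hs : IsStieltjesPD q s) (k : ℕ) :
    DSL q (katetov q 1 s) k = s 0 * DSM q s (k + 1) * s 0 ∧
      DSM q (katetov q 1 s) k = (s 0)⁻¹ * DSL q s k * (s 0)⁻¹ :=
  stmt5_general q s hs k

end
end
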